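/- Let P be a finite graded poset, i.e., a poset admitting a rank function rk: P → ℤ_{≥0} with rk(q) = rk(p) + 1 whenever q covers p, with rk(p) = 0 for all minimal p and rk(q) = rk(P) for all maximal q (where rk(P) is the maximum rank). Then the rank distribution μ_rk, which is the uniform distribution on the set of order ideals of the form rk^{-1}({0,…,k−1}) for k ∈ {0,1,…,rk(P)+1}, is toggle-symmetric. -/
import Mathlib


open Finset
open scoped Classical

noncomputable section

variable {α : Type*} [Fintype α] [PartialOrder α]

/-- `I` is an order ideal (down-set) of the finite poset `α`. -/
def IsIdeal (I : Finset α) : Prop := ∀ p ∈ I, ∀ q : α, q ≤ p → q ∈ I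

/-- The set `J(P)` of all order ideals of the finite poset `α`. -/
def idealsFinset (α : Type*) [Fintype α] [PartialOrder α] : Finset (Finset α) :=
  Finset.univ.filter fun I => IsIdeal I

/-- `p` can be toggled in to the order ideal `I`. -/
def CanToggleIn (I : Finset α) (p : α) : Prop := p ∉ I ∧ IsIdeal (insert p I)

/-- `p` can be toggled out of the order ideal `I`. -/
def CanToggleOut (I : Finset α) (p : α) : Prop := p ∈ I ∧ IsIdeal (I.erase p)

/-- The jaggedness of `I`: the number of elements that can be toggled in,
plus the number of elements that can be toggled out. -/
def jag (I : Finset α) : ℕ :=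
  (Finset.univ.filter fun p => CanToggleIn I p).card +
  (Finset.univ.filter fun p => CanToggleOut I p).card

/-- The probability, under `μ`, that a random order ideal satisfies `E`. -/
def prIdeal (μ : Finset α → ℝ) (E : Finset α → Prop) : ℝ :=
  ∑ I ∈ (idealsFinset α).filter E, μ I

/-- `μ` is toggle-symmetric: for every `p`, the probability that `p` can be toggled in
equals the probability that `p` can be toggled out. -/
def ToggleSymmetric (μ : Finset α → ℝ) : Prop :=
  ∀ p : α, prIdeal μ (fun I => CanToggleIn I p) = prIdeal μ (fun I => CanToggleOut I p)

/-- `μ` is a probability distribution on `J(P)`. -/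
def IsProbDist (μ : Finset α → ℝ) : Prop :=
  (∀ I, 0 ≤ μ I) ∧ (∀ I, ¬ IsIdeal I → μ I = 0) ∧ (∑ I ∈ idealsFinset α, μ I = 1)

/-- The expectation of the statistic `f` with respect to `μ`. -/
def expectStat (μ : Finset α → ℝ) (f : Finset α → ℝ) : ℝ :=
  ∑ I ∈ idealsFinset α, μ I * f I

/-- The linear extensions of `α`: order-preserving bijections `α ≃ {1,…,n}`. -/
def linExts (α : Type*) [Fintype α] [PartialOrder α] :
    Finset (α ≃ Fin (Fintype.card α)) :=
  Finset.univ.filter fun e => ∀ p q : α, p ≤ q → e p ≤ e q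

/-- The linear distribution `μ_lin` on `J(P)`: the distribution of `ℓ⁻¹({1,…,k})` for a
uniformly random linear extension `ℓ` and uniform `k ∈ {0,1,…,n}`. -/
def muLin (α : Type*) [Fintype α] [PartialOrder α] (I : Finset α) : ℝ :=
  (∑ e ∈ linExts α, ∑ k ∈ Finset.range (Fintype.card α + 1),
      if Finset.univ.filter (fun p => (e p : ℕ) < k) = I then (1 : ℝ) else 0) /
    ((linExts α).card * (Fintype.card α + 1))

/-- The rank distribution `μ_rk` associated to a rank function `rk`: the distribution of
the order ideal `rk⁻¹({0,…,k−1})` for uniform `k ∈ {0,1,…,rk(P)+1}`, i.e. the uniform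
distribution on the order ideals of this form (for a graded poset these ideals are
pairwise distinct). -/
def muRank (α : Type*) [Fintype α] [PartialOrder α] (rk : α → ℕ) (I : Finset α) : ℝ :=
  (∑ k ∈ Finset.range (Finset.univ.sup rk + 2),
      if Finset.univ.filter (fun p => rk p < k) = I then (1 : ℝ) else 0) /
    (Finset.univ.sup rk + 2)


section Aux

variable {α : Type*} [Fintype α] [PartialOrder α] (rk : α → ℕ)

lemma rk_strictMono (hcov : ∀ p q : α, p ⋖ q → rk q = rk p + 1) : ∀ {p q : α}, q < p → rk q < rk p := by
  intro p
  induction p using WellFoundedLT.induction with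
  | _ p ih =>
    intro q hqp
    obtain ⟨c, hqc, hcp⟩ := exists_le_covBy_of_lt hqp
    have hc : rk p = rk c + 1 := hcov c p hcp
    rcases eq_or_lt_of_le hqc with rfl | h
    · omega
    · have := ih c hcp.lt h
      omega

lemma rk_mono (hcov : ∀ p q : α, p ⋖ q → rk q = rk p + 1) {p q : α} (h : q ≤ p) : rk q ≤ rk p := by
  rcases eq_or_lt_of_le h with rfl | h
  · exact le_rfl
  · exact (rk_strictMono rk hcov h).le

lemma isIdeal_rankIdeal (hcov : ∀ p q : α, p ⋖ q → rk q = rk p + 1) (k : ℕ) : IsIdeal (Finset.univ.filter fun p => rk p < k) := by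
  intro p hp q hq
  simp only [Finset.mem_filter, Finset.mem_univ, true_and] at hp ⊢
  exact lt_of_le_of_lt (rk_mono rk hcov hq) hp

end Aux

/-- for a finite graded poset, the rank distribution `μ_rk` is
toggle-symmetric.  Here `rk` is a rank function: it increases by exactly one along covers,
takes the value `0` at every minimal element, and takes the maximal value `rk(P)` at every
maximal element. -/
theorem muRank_toggleSymmetric (α : Type*) [Fintype α] [PartialOrder α]
    (rk : α → ℕ)
    (hcov : ∀ p q : α, p ⋖ q → rk q = rk p + 1)
    (hmin : ∀ p : α, IsMin p → rk p = 0)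
    (hmax : ∀ p : α, IsMax p → rk p = Finset.univ.sup rk) :
    ToggleSymmetric (muRank α rk) := by
  classical
  set R := Finset.univ.sup rk with hR
  -- key characterizations
  have hIdeal : ∀ k : ℕ, IsIdeal (Finset.univ.filter fun p => rk p < k) :=
    isIdeal_rankIdeal rk hcov
  have hIn : ∀ (p : α) (k : ℕ),
      CanToggleIn (Finset.univ.filter fun q => rk q < k) p ↔ k = rk p := by
    intro p k
    constructor
    · rintro ⟨hnot, hins⟩
      simp only [Finset.mem_filter, Finset.mem_univ, true_and, not_lt] at hnot
      -- hnot : k ≤ rk p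
      by_cases hm : IsMin p
      · have := hmin p hm; omega
      · obtain ⟨c, hc⟩ := exists_covBy_of_wellFoundedGT hm
        have hcrk : rk p = rk c + 1 := hcov c p hc
        have hcmem : c ∈ insert p (Finset.univ.filter fun q => rk q < k) :=
          hins p (Finset.mem_insert_self _ _) c hc.lt.le
        rcases Finset.mem_insert.1 hcmem with rfl | hcmem'
        · exact absurd rfl hc.lt.ne
        · simp only [Finset.mem_filter, Finset.mem_univ, true_and] at hcmem'
          omega
    · rintro rfl
      refine ⟨by simp, ?_⟩
      intro r hr s hs
      rcases Finset.mem_insert.1 hr with rfl | hr'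
      · rcases eq_or_lt_of_le hs with rfl | hs'
        · exact Finset.mem_insert_self _ _
        · exact Finset.mem_insert_of_mem (by
            simp only [Finset.mem_filter, Finset.mem_univ, true_and]
            exact rk_strictMono rk hcov hs')
      · simp only [Finset.mem_filter, Finset.mem_univ, true_and] at hr'
        exact Finset.mem_insert_of_mem (by
          simp only [Finset.mem_filter, Finset.mem_univ, true_and]
          exact lt_of_le_of_lt (rk_mono rk hcov hs) hr')
  have hOut : ∀ (p : α) (k : ℕ), k < R + 2 →
      (CanToggleOut (Finset.univ.filter fun q => rk q < k) p ↔ k = rk p + 1) := by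
    intro p k hkR
    constructor
    · rintro ⟨hmem, hers⟩
      simp only [Finset.mem_filter, Finset.mem_univ, true_and] at hmem
      -- hmem : rk p < k
      by_cases hm : IsMax p
      · have := hmax p hm; omega
      · obtain ⟨c, hc⟩ := exists_covBy_of_wellFoundedLT hm
        have hcrk : rk c = rk p + 1 := hcov p c hc
        by_contra hne
        have hck : rk c < k := by omega
        have hcmem : c ∈ (Finset.univ.filter fun q => rk q < k).erase p := by
          simp only [Finset.mem_erase, Finset.mem_filter, Finset.mem_univ, true_and]
          exact ⟨fun h => hc.lt.ne' h, hck⟩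
        have := hers c hcmem p hc.lt.le
        exact (Finset.notMem_erase p _) this
    · rintro rfl
      refine ⟨by simp, ?_⟩
      intro r hr s hs
      simp only [Finset.mem_erase, Finset.mem_filter, Finset.mem_univ, true_and] at hr
      simp only [Finset.mem_erase, Finset.mem_filter, Finset.mem_univ, true_and]
      have hsr : rk s ≤ rk r := rk_mono rk hcov hs
      refine ⟨?_, by omega⟩
      rintro rfl
      have hlt : s < r := lt_of_le_of_ne hs (fun h => hr.1 h.symm)
      have := rk_strictMono rk hcov hlt
      omega
  -- compute prIdeal
  have key : ∀ E : Finset α → Prop, prIdeal (muRank α rk) E =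
      (∑ k ∈ Finset.range (R + 2),
        if E (Finset.univ.filter fun p => rk p < k) then (1:ℝ) else 0) / (R + 2) := by
    intro E
    unfold prIdeal muRank
    rw [← Finset.sum_div]
    congr 1
    rw [Finset.sum_comm]
    refine Finset.sum_congr rfl fun k _ => ?_
    rw [Finset.sum_ite_eq]
    simp [idealsFinset, hIdeal k]
  intro p
  have hp1 : rk p ∈ Finset.range (R + 2) := by
    have := Finset.le_sup (f := rk) (Finset.mem_univ p)
    simp only [Finset.mem_range]; omega
  have hp2 : rk p + 1 ∈ Finset.range (R + 2) := by
    have := Finset.le_sup (f := rk) (Finset.mem_univ p)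
    simp only [Finset.mem_range]; omega
  rw [key, key]
  congr 1
  have h1 : (∑ k ∈ Finset.range (R + 2),
      if CanToggleIn (Finset.univ.filter fun q => rk q < k) p then (1:ℝ) else 0)
      = ∑ k ∈ Finset.range (R + 2), if k = rk p then (1:ℝ) else 0 :=
    Finset.sum_congr rfl fun k _ => if_congr (hIn p k) rfl rfl
  have h2 : (∑ k ∈ Finset.range (R + 2),
      if CanToggleOut (Finset.univ.filter fun q => rk q < k) p then (1:ℝ) else 0)
      = ∑ k ∈ Finset.range (R + 2), if k = rk p + 1 then (1:ℝ) else 0 :=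
    Finset.sum_congr rfl fun k hk =>
      if_congr (hOut p k (Finset.mem_range.1 hk)) rfl rfl
  rw [h1, h2, Finset.sum_ite_eq' _ (rk p) (fun _ => (1:ℝ)),
    Finset.sum_ite_eq' _ (rk p + 1) (fun _ => (1:ℝ))]
  simp [hp1, hp2]
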